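/- arXiv:1103.0566 — 3 statements merged into one kernel-verified Lean document; each statement's English description precedes it below -/
import Mathlib

section
/- Let φ : ℝ → ℝ be a smooth increasing function such that |φ''(x)| ≤ C·(φ'(x))² for all x ∈ ℝ and some constant C > 0. Then there exist constants c₁, c₂ > 0 such that for all x, y ∈ ℝ with |φ(x) − φ(y)| ≤ 1, one has c₁·φ'(y) ≤ φ'(x) ≤ c₂·φ'(y). -/
/-- If φ is smooth, increasing, and `|φ''| ≤ C (φ')²`, then `φ'(x) ≍ φ'(y)`
whenever `|φ(x) - φ(y)| ≤ 1`. -/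
theorem stmt1 (φ : ℝ → ℝ) (hsmooth : ContDiff ℝ (⊤ : ℕ∞) φ) (hmono : StrictMono φ)
    (hpos : ∀ x, 0 < deriv φ x)
    (C : ℝ) (hC : 0 < C) (hineq : ∀ x, |deriv (deriv φ) x| ≤ C * (deriv φ x)^2) :
    ∃ c₁ > (0:ℝ), ∃ c₂ > (0:ℝ), ∀ x y : ℝ, |φ x - φ y| ≤ 1 →
      c₁ * deriv φ y ≤ deriv φ x ∧ deriv φ x ≤ c₂ * deriv φ y := by
  obtain ⟨hφd, hfd⟩ := contDiff_infty_iff_deriv.mp (hsmooth.of_le le_rfl)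
  have hfdiff : Differentiable ℝ (deriv φ) := hfd.differentiable (by simp)
  -- derivative facts
  have hL : ∀ x, HasDerivAt (fun z => Real.log (deriv φ z))
      (deriv (deriv φ) x / deriv φ x) x := fun x =>
    ((hfdiff x).hasDerivAt).log (ne_of_gt (hpos x))
  have hφh : ∀ x, HasDerivAt φ (deriv φ x) x := fun x => (hφd x).hasDerivAt
  -- g₁ = log φ' - C φ is antitone
  have hg1 : Antitone (fun z => Real.log (deriv φ z) - C * φ z) := by
    have hder : ∀ x, HasDerivAt (fun z => Real.log (deriv φ z) - C * φ z)
        (deriv (deriv φ) x / deriv φ x - C * deriv φ x) x := fun x =>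
      (hL x).sub ((hφh x).const_mul C)
    have hdiff : Differentiable ℝ (fun z => Real.log (deriv φ z) - C * φ z) :=
      fun x => (hder x).differentiableAt
    apply antitone_of_deriv_nonpos hdiff
    intro x
    rw [(hder x).deriv]
    have h1 : deriv (deriv φ) x ≤ C * (deriv φ x)^2 :=
      (le_abs_self _).trans (hineq x)
    have hb := hpos x
    rw [sub_nonpos, div_le_iff₀ hb]
    nlinarith
  -- g₂ = log φ' + C φ is monotone
  have hg2 : Monotone (fun z => Real.log (deriv φ z) + C * φ z) := by
    have hder : ∀ x, HasDerivAt (fun z => Real.log (deriv φ z) + C * φ z)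
        (deriv (deriv φ) x / deriv φ x + C * deriv φ x) x := fun x =>
      (hL x).add ((hφh x).const_mul C)
    have hdiff : Differentiable ℝ (fun z => Real.log (deriv φ z) + C * φ z) :=
      fun x => (hder x).differentiableAt
    apply monotone_of_deriv_nonneg hdiff
    intro x
    rw [(hder x).deriv]
    have h1 : -(C * (deriv φ x)^2) ≤ deriv (deriv φ) x := by
      have := (neg_abs_le (deriv (deriv φ) x))
      linarith [hineq x]
    have hb := hpos x
    have h2 : -(C * deriv φ x) ≤ deriv (deriv φ) x / deriv φ x := by
      rw [neg_le, ← neg_div, div_le_iff₀ hb]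
      nlinarith
    linarith
  -- main log estimate
  have main : ∀ x y : ℝ, |φ x - φ y| ≤ 1 →
      Real.log (deriv φ x) - Real.log (deriv φ y) ≤ C := by
    intro x y h
    rcases le_total x y with hxy | hxy
    · have h2 := hg2 hxy
      simp only at h2
      have habs : φ y - φ x ≤ 1 := by
        rw [abs_sub_comm] at h
        exact (le_abs_self _).trans h
      nlinarith
    · have h1 := hg1 hxy
      simp only at h1
      have habs : φ x - φ y ≤ 1 := (le_abs_self _).trans h
      nlinarith
  refine ⟨Real.exp (-C), Real.exp_pos _, Real.exp C, Real.exp_pos _, fun x y h => ?_⟩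
  have hx := hpos x
  have hy := hpos y
  have m1 := main x y h
  have m2 := main y x (by rwa [abs_sub_comm])
  constructor
  · have : Real.log (deriv φ y) + (-C) ≤ Real.log (deriv φ x) := by linarith
    calc Real.exp (-C) * deriv φ y = Real.exp (Real.log (deriv φ y) + (-C)) := by
          rw [Real.exp_add, Real.exp_log hy]; ring
      _ ≤ Real.exp (Real.log (deriv φ x)) := Real.exp_le_exp.mpr this
      _ = deriv φ x := Real.exp_log hx
  · have : Real.log (deriv φ x) ≤ Real.log (deriv φ y) + C := by linarith
    calc deriv φ x = Real.exp (Real.log (deriv φ x)) := (Real.exp_log hx).symm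
      _ ≤ Real.exp (Real.log (deriv φ y) + C) := Real.exp_le_exp.mpr this
      _ = Real.exp C * deriv φ y := by rw [Real.exp_add, Real.exp_log hy]; ring
end

section
/- Let φ : ℝ → ℝ be C² increasing with φ' > 0, and suppose |φ''(x)| ≤ C·(φ'(x))² for all x. Then for all x, y ∈ ℝ with |φ(x) − φ(y)| ≤ 1, one has e^{−C} ≤ φ'(x)/φ'(y) ≤ e^{C}. -/
/-! `log φ'` is `C`-Lipschitz with respect to `φ`: indeed
`(log φ')' = φ''/φ'` has absolute value at most `C φ'`, so both `C φ + log φ'` and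
`C φ - log φ'` are nondecreasing. Hence `|log φ'(x) - log φ'(y)| ≤ C |φ(x) - φ(y)| ≤ C`,
and exponentiating gives the two-sided bound on `φ'(x)/φ'(y)`. -/

open Real

theorem abs_sub_le_mul_abs_sub_of_abs_deriv_le {f g f' g' : ℝ → ℝ} {C : ℝ} (hC : 0 ≤ C)
    (hf : ∀ t, HasDerivAt f (f' t) t) (hg : ∀ t, HasDerivAt g (g' t) t)
    (hbound : ∀ t, |g' t| ≤ C * f' t) (x y : ℝ) :
    |g x - g y| ≤ C * |f x - f y| := by
  have hplus : Monotone (fun t => C * f t + g t) :=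
    monotone_of_hasDerivAt_nonneg (fun t => ((hf t).const_mul C).add (hg t))
      fun t => show 0 ≤ C * f' t + g' t by linarith [neg_abs_le (g' t), hbound t]
  have hminus : Monotone (fun t => C * f t - g t) :=
    monotone_of_hasDerivAt_nonneg (fun t => ((hf t).const_mul C).sub (hg t))
      fun t => show 0 ≤ C * f' t - g' t by linarith [le_abs_self (g' t), hbound t]
  wlog hxy : x ≤ y generalizing x y
  · rw [abs_sub_comm, abs_sub_comm (f x)]
    exact this y x (le_of_not_ge hxy)
  have h₁ := hplus hxy
  have h₂ := hminus hxy
  simp only at h₁ h₂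
  calc |g x - g y| ≤ C * (f y - f x) := abs_sub_le_iff.mpr ⟨by linarith, by linarith⟩
    _ ≤ C * |f x - f y| := by
      rw [abs_sub_comm]
      exact mul_le_mul_of_nonneg_left (le_abs_self _) hC

theorem exp_neg_le_div_and_div_le_exp_of_abs_log_sub_log_le {a b C : ℝ} (ha : 0 < a)
    (hb : 0 < b) (h : |log a - log b| ≤ C) :
    exp (-C) ≤ a / b ∧ a / b ≤ exp C := by
  rw [← log_div ha.ne' hb.ne', abs_le] at h
  rw [← le_log_iff_exp_le (div_pos ha hb), ← log_le_iff_le_exp (div_pos ha hb)]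
  exact h

theorem stmt4_general (φ : ℝ → ℝ) (hsmooth : ContDiff ℝ 2 φ)
    (hpos : ∀ x, 0 < deriv φ x)
    (C : ℝ) (hC : 0 < C) (hineq : ∀ x, |deriv (deriv φ) x| ≤ C * (deriv φ x)^2)
    (x y : ℝ) (hxy : |φ x - φ y| ≤ 1) :
    Real.exp (-C) ≤ deriv φ x / deriv φ y ∧ deriv φ x / deriv φ y ≤ Real.exp C := by
  have hφ : ∀ t, HasDerivAt φ (deriv φ t) t := fun t =>
    (hsmooth.differentiable two_ne_zero t).hasDerivAt
  have hlog : ∀ t, HasDerivAt (fun s => log (deriv φ s))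
      (deriv (deriv φ) t / deriv φ t) t := fun t =>
    (hsmooth.differentiable_deriv_two t).hasDerivAt.log (hpos t).ne'
  have hlog_bound : ∀ t, |deriv (deriv φ) t / deriv φ t| ≤ C * deriv φ t := fun t => by
    rw [abs_div, abs_of_pos (hpos t), div_le_iff₀ (hpos t)]
    linarith [hineq t]
  apply exp_neg_le_div_and_div_le_exp_of_abs_log_sub_log_le (hpos x) (hpos y)
  calc |log (deriv φ x) - log (deriv φ y)| ≤ C * |φ x - φ y| :=
        abs_sub_le_mul_abs_sub_of_abs_deriv_le hC.le hφ hlog hlog_bound x y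
    _ ≤ C := mul_le_of_le_one_right hC.le hxy

/-- If `|φ''| ≤ C (φ')²`, then `e^{-C} ≤ φ'(x)/φ'(y) ≤ e^{C}` whenever
`|φ(x) - φ(y)| ≤ 1`. -/
theorem stmt4 (φ : ℝ → ℝ) (hsmooth : ContDiff ℝ 2 φ) (hmono : StrictMono φ)
    (hpos : ∀ x, 0 < deriv φ x)
    (C : ℝ) (hC : 0 < C) (hineq : ∀ x, |deriv (deriv φ) x| ≤ C * (deriv φ x)^2)
    (x y : ℝ) (hxy : |φ x - φ y| ≤ 1) :
    Real.exp (-C) ≤ deriv φ x / deriv φ y ∧ deriv φ x / deriv φ y ≤ Real.exp C :=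
  stmt4_general φ hsmooth hpos C hC hineq x y hxy
end

section
/- Let τ be a complex measure supported on the interval (−1,1) ⊂ ℝ with |τ((−1,1))| ≥ 1 and ∫|x|^j d|τ|(x) < ∞ for j = 1, …, n. Then there exist points ξ₁, …, ξₙ ∈ ℂ such that for every j ∈ {1, …, n}, (1/τ((−1,1)))·∫ x^j dτ(x) = (1/n)·Σ_{k=1}^n ξ_k^j. Moreover, the points ξ₁, …, ξₙ lie in a disk D(0, C) for some constant C depending only on n and |τ|((−1,1)). -/
/-!
Newton's identities `k eₖ = (-1)^(k+1) ∑_{i<k} (-1)^i eᵢ p_{k-i}` let one solve recursively for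
elementary symmetric functions `e₁, …, eₙ` with prescribed power sums `p₁, …, pₙ`, here
`p_j = n · (∫ x^j dτ) / τ((-1,1))`; the `n` roots of `X^n - e₁ X^(n-1) + ⋯ + (-1)^n eₙ` then have
exactly these power sums. Since `|x| < 1` on the support and `|τ((-1,1))| ≥ 1`, we get
`|p_j| ≤ n |τ|((-1,1)) =: B`, the recursion gives `|eₖ| ≤ (1 + B)^k`, and Cauchy's bound puts the
roots in the disk of radius `1 + (1 + B)^n`.
-/

open MeasureTheory Finset Polynomial

section NewtonIdentities

variable {K : Type*} [CommRing K]

def NewtonIdentity (e p : ℕ → K) (k : ℕ) : Prop :=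
  (k : K) * e k = (-1) ^ (k + 1) * ∑ i ∈ range k, (-1) ^ i * e i * p (k - i)

theorem newtonIdentity_esymm_psum {σ : Type*} [Fintype σ] (ξ : σ → K) (k : ℕ) :
    NewtonIdentity (fun j => (univ.val.map ξ).esymm j) (fun j => ∑ s, ξ s ^ j) k := by
  have h := congrArg (MvPolynomial.aeval ξ) (MvPolynomial.mul_esymm_eq_sum σ K k)
  simp only [map_mul, map_pow, map_neg, map_one, map_natCast, map_sum,
    MvPolynomial.aeval_esymm_eq_multiset_esymm] at h
  rw [NewtonIdentity, h, sum_filter, Nat.sum_antidiagonal_eq_sum_range_succ_mk, sum_range_succ,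
    if_neg (lt_irrefl k), add_zero]
  refine congrArg _ (sum_congr rfl fun i hi => ?_)
  simp [if_pos (mem_range.1 hi), MvPolynomial.psum]

theorem eq_of_newtonIdentity {e e' p p' : ℕ → K} {n : ℕ} (he0 : e 0 = 1)
    (he : ∀ k ≤ n, e k = e' k) (hp : ∀ k ≤ n, NewtonIdentity e p k)
    (hp' : ∀ k ≤ n, NewtonIdentity e' p' k) : ∀ k, 1 ≤ k → k ≤ n → p k = p' k := by
  intro k
  induction k using Nat.strong_induction_on with
  | _ k ih =>
  intro hk hkn
  obtain ⟨m, rfl⟩ : ∃ m, k = m + 1 := ⟨k - 1, by omega⟩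
  have he0' : e' 0 = 1 := he 0 n.zero_le ▸ he0
  have h := hp (m + 1) hkn
  have h' := hp' (m + 1) hkn
  rw [NewtonIdentity, sum_range_succ'] at h h'
  simp only [pow_zero, he0, he0', one_mul, Nat.sub_zero] at h h'
  have hsum : ∑ i ∈ range m, (-1) ^ (i + 1) * e (i + 1) * p (m + 1 - (i + 1))
      = ∑ i ∈ range m, (-1) ^ (i + 1) * e' (i + 1) * p' (m + 1 - (i + 1)) :=
    sum_congr rfl fun i hi => by
      have := mem_range.1 hi
      rw [he (i + 1) (by omega), ih (m + 1 - (i + 1)) (by omega) (by omega) (by omega)]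
  rw [he (m + 1) hkn, hsum, h'] at h
  exact add_left_cancel ((isUnit_neg_one.pow _).mul_left_cancel h).symm

end NewtonIdentities

section EsymmOfPsum

variable {K : Type*} [Field K]

noncomputable def esymmOfPsum (p : ℕ → K) : ℕ → K
  | 0 => 1
  | k + 1 => (-1) ^ k / (k + 1) *
      ∑ i : Fin (k + 1), (-1) ^ (i : ℕ) * esymmOfPsum p i * p (k + 1 - i)
decreasing_by exact i.isLt

@[simp]
theorem esymmOfPsum_zero (p : ℕ → K) : esymmOfPsum p 0 = 1 := by
  rw [esymmOfPsum]

theorem esymmOfPsum_succ (p : ℕ → K) (k : ℕ) :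
    esymmOfPsum p (k + 1) =
      (-1) ^ k / (k + 1) * ∑ i ∈ range (k + 1), (-1) ^ i * esymmOfPsum p i * p (k + 1 - i) := by
  rw [esymmOfPsum, Fin.sum_univ_eq_sum_range (fun i => (-1) ^ i * esymmOfPsum p i * p (k + 1 - i))]

theorem newtonIdentity_esymmOfPsum [CharZero K] (p : ℕ → K) (k : ℕ) :
    NewtonIdentity (esymmOfPsum p) p k := by
  cases k with
  | zero => simp [NewtonIdentity]
  | succ k =>
    have : (k : K) + 1 ≠ 0 := k.cast_add_one_ne_zero
    rw [NewtonIdentity, esymmOfPsum_succ]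
    push_cast
    field_simp
    ring

theorem norm_esymmOfPsum_le {𝕜 : Type*} [RCLike 𝕜] {p : ℕ → 𝕜} {n : ℕ} {B : ℝ} (hB : 0 ≤ B)
    (hp : ∀ j, 1 ≤ j → j ≤ n → ‖p j‖ ≤ B) : ∀ k ≤ n, ‖esymmOfPsum p k‖ ≤ (1 + B) ^ k := by
  intro k
  induction k using Nat.strong_induction_on with
  | _ k ih =>
  intro hkn
  cases k with
  | zero => simp
  | succ m =>
    have hcoef : ‖(-1) ^ m / ((m : 𝕜) + 1)‖ ≤ 1 := by
      rw [norm_div, norm_pow, norm_neg, norm_one, one_pow, ← Nat.cast_succ, RCLike.norm_natCast]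
      exact div_le_one_of_le₀ (by simp) (by positivity)
    have hgeom := geom_sum_mul (1 + B) (m + 1)
    rw [add_sub_cancel_left] at hgeom
    calc ‖esymmOfPsum p (m + 1)‖
        ≤ 1 * ∑ i ∈ range (m + 1), (1 + B) ^ i * B := by
          rw [esymmOfPsum_succ, norm_mul]
          refine mul_le_mul hcoef ((norm_sum_le _ _).trans (sum_le_sum fun i hi => ?_))
            (norm_nonneg _) zero_le_one
          have := mem_range.1 hi
          rw [norm_mul, norm_mul, norm_pow, norm_neg, norm_one, one_pow, one_mul]
          exact mul_le_mul (ih i (by omega) (by omega)) (hp _ (by omega) (by omega))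
            (norm_nonneg _) (by positivity)
      _ = (1 + B) ^ (m + 1) - 1 := by rw [one_mul, ← sum_mul, hgeom]
      _ ≤ (1 + B) ^ (m + 1) := by linarith

end EsymmOfPsum

theorem Multiset.exists_fin_map_eq_of_card_eq {α : Type*} {s : Multiset α} {n : ℕ}
    (h : Multiset.card s = n) : ∃ ξ : Fin n → α, univ.val.map ξ = s := by
  obtain ⟨l, rfl⟩ : ∃ l : List α, (l : Multiset α) = s := ⟨s.toList, s.coe_toList⟩
  rw [Multiset.coe_card] at h
  subst h
  exact ⟨l.get, by rw [Fin.univ_val_map, List.ofFn_get]⟩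

theorem Polynomial.degree_sum_C_mul_X_pow_lt {R : Type*} [Semiring R] (c : ℕ → R) (n : ℕ) :
    (∑ j ∈ range n, C (c j) * X ^ j).degree < (n : WithBot ℕ) :=
  (degree_sum_le _ _).trans_lt <| (Finset.sup_lt_iff (WithBot.bot_lt_coe n)).2 fun _ hj =>
    (degree_C_mul_X_pow_le _ _).trans_lt (WithBot.coe_lt_coe.2 (mem_range.1 hj))

section Vieta

variable {K : Type*} [Field K]

noncomputable def monicOfEsymm (e : ℕ → K) (n : ℕ) : K[X] :=
  X ^ n + ∑ j ∈ range n, C ((-1) ^ (n - j) * e (n - j)) * X ^ j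

variable (e : ℕ → K) (n : ℕ)

theorem monic_monicOfEsymm : (monicOfEsymm e n).Monic :=
  monic_X_pow_add (degree_sum_C_mul_X_pow_lt _ n)

theorem natDegree_monicOfEsymm : (monicOfEsymm e n).natDegree = n := by
  rw [monicOfEsymm, natDegree_add_eq_left_of_degree_lt, natDegree_X_pow]
  simpa only [degree_X_pow] using degree_sum_C_mul_X_pow_lt _ n

theorem coeff_monicOfEsymm_of_lt {k : ℕ} (hk : k < n) :
    (monicOfEsymm e n).coeff k = (-1) ^ (n - k) * e (n - k) := by
  rw [monicOfEsymm, coeff_add, coeff_X_pow, if_neg hk.ne, zero_add, finsetSum_coeff]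
  simp only [coeff_C_mul_X_pow]
  rw [sum_ite_eq (range n) k, if_pos (mem_range.2 hk)]

theorem exists_esymm_eq [IsAlgClosed K] (he0 : e 0 = 1) :
    ∃ ξ : Fin n → K, (∀ j ≤ n, (univ.val.map ξ).esymm j = e j) ∧
      ∀ k, (monicOfEsymm e n).IsRoot (ξ k) := by
  set q := monicOfEsymm e n
  have hcard : Multiset.card q.roots = q.natDegree :=
    splits_iff_card_roots.1 (IsAlgClosed.splits q)
  obtain ⟨ξ, hξ⟩ :=
    Multiset.exists_fin_map_eq_of_card_eq (hcard.trans (natDegree_monicOfEsymm e n))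
  refine ⟨ξ, fun j hj => ?_, fun k =>
    isRoot_of_mem_roots (hξ ▸ Multiset.mem_map_of_mem _ (mem_univ k))⟩
  rcases j.eq_zero_or_pos with rfl | hj0
  · simp [he0, Multiset.esymm]
  have hvieta := coeff_eq_esymm_roots_of_card hcard (k := n - j)
    (by rw [natDegree_monicOfEsymm]; omega)
  rw [(monic_monicOfEsymm e n).leadingCoeff, one_mul, natDegree_monicOfEsymm,
    coeff_monicOfEsymm_of_lt e n (by omega), Nat.sub_sub_self hj, ← hξ] at hvieta
  exact ((isUnit_neg_one.pow _).mul_left_cancel hvieta).symm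

end Vieta

theorem norm_le_of_isRoot_monicOfEsymm {K : Type*} [NormedField K] {e : ℕ → K} {n : ℕ} {B : ℝ}
    (hB : 0 ≤ B) (he : ∀ j, 1 ≤ j → j ≤ n → ‖e j‖ ≤ B) {z : K}
    (hz : (monicOfEsymm e n).IsRoot z) : ‖z‖ ≤ 1 + B := by
  have hroot := hz.norm_lt_cauchyBound (monic_monicOfEsymm e n).ne_zero
  rw [cauchyBound, (monic_monicOfEsymm e n).leadingCoeff, nnnorm_one, div_one,
    natDegree_monicOfEsymm] at hroot
  have hsup : (range n).sup (fun i => ‖(monicOfEsymm e n).coeff i‖₊) ≤ B.toNNReal :=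
    Finset.sup_le fun i hi => by
      have := mem_range.1 hi
      rw [coeff_monicOfEsymm_of_lt e n this, nnnorm_mul, nnnorm_pow, nnnorm_neg, nnnorm_one,
        one_pow, one_mul, ← NNReal.coe_le_coe, coe_nnnorm, Real.coe_toNNReal B hB]
      exact he _ (by omega) (by omega)
  have := (hroot.trans_le (add_le_add_left hsup 1)).le
  rw [← NNReal.coe_le_coe, coe_nnnorm, NNReal.coe_add, Real.coe_toNNReal B hB,
    NNReal.coe_one] at this
  linarith

theorem norm_integral_pow_mul_le {ν : Measure ℝ} [IsFiniteMeasure ν] {f : ℝ → ℂ}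
    (hx : ∀ᵐ x ∂ν, |x| ≤ 1) (hf : ∀ᵐ x ∂ν, ‖f x‖ ≤ 1) (j : ℕ) :
    ‖∫ x, (x : ℂ) ^ j * f x ∂ν‖ ≤ ν.real Set.univ := by
  refine (norm_integral_le_of_norm_le_const ?_).trans_eq (one_mul _)
  filter_upwards [hx, hf] with x hx hf
  rw [norm_mul, norm_pow, Complex.norm_real, Real.norm_eq_abs]
  exact mul_le_one₀ (pow_le_one₀ (abs_nonneg x) hx) (norm_nonneg _) hf

theorem stmt5_general (n : ℕ) :
    ∃ C : ℝ → ℝ, ∀ (ν : Measure ℝ) (_ : IsFiniteMeasure ν)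
      (f : ℝ → ℂ),
      ν (Set.Ioo (-1) 1)ᶜ = 0 →
      (∀ᵐ x ∂ν, ‖f x‖ = 1) →
      AEStronglyMeasurable f ν →
      1 ≤ ‖∫ x, f x ∂ν‖ →
      (∀ j : ℕ, 1 ≤ j → j ≤ n → Integrable (fun x : ℝ => |x|^j) ν) →
      ∃ ξ : Fin n → ℂ,
        (∀ j : ℕ, 1 ≤ j → j ≤ n →
          (∫ x, (x:ℂ)^j * f x ∂ν) / (∫ x, f x ∂ν)
            = (1/(n:ℂ)) * ∑ k : Fin n, (ξ k)^j) ∧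
        (∀ k : Fin n, ‖ξ k‖ ≤ C ((ν Set.univ).toReal)) := by
  refine ⟨fun M => 1 + (1 + n * M) ^ n, fun ν _ f hsupp hf _ hI _ => ?_⟩
  set M := (ν Set.univ).toReal
  set p : ℕ → ℂ := fun j => n * ((∫ x, (x : ℂ) ^ j * f x ∂ν) / ∫ x, f x ∂ν)
  have hx : ∀ᵐ x ∂ν, |x| ≤ 1 :=
    (show ∀ᵐ x ∂ν, x ∈ Set.Ioo (-1 : ℝ) 1 from hsupp).mono fun x hx =>
      abs_le.2 ⟨hx.1.le, hx.2.le⟩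
  have hp : ∀ j, 1 ≤ j → j ≤ n → ‖p j‖ ≤ n * M := fun j _ _ => by
    rw [norm_mul, norm_div, Complex.norm_natCast]
    exact mul_le_mul_of_nonneg_left ((div_le_self (norm_nonneg _) hI).trans
      (norm_integral_pow_mul_le hx (hf.mono fun x hx => hx.le) j)) n.cast_nonneg
  have hB : 0 ≤ (n : ℝ) * M := by positivity
  obtain ⟨ξ, hξ, hroot⟩ := exists_esymm_eq (esymmOfPsum p) n (esymmOfPsum_zero p)
  have hpsum : ∀ j, 1 ≤ j → j ≤ n → ∑ k, ξ k ^ j = p j :=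
    eq_of_newtonIdentity (by simp [Multiset.esymm]) hξ (fun k _ => newtonIdentity_esymm_psum ξ k)
      (fun k _ => newtonIdentity_esymmOfPsum p k)
  refine ⟨ξ, fun j hj hjn => ?_, fun k => norm_le_of_isRoot_monicOfEsymm (by positivity)
    (fun j _ hjn => (norm_esymmOfPsum_le hB hp j hjn).trans
      (pow_le_pow_right₀ (by linarith) hjn)) (hroot k)⟩
  have : (n : ℂ) ≠ 0 := by exact_mod_cast (show n ≠ 0 by omega)
  rw [hpsum j hj hjn, ← mul_assoc, one_div, inv_mul_cancel₀ this, one_mul]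

/-- Lemma (Ortega-Cerdà): given a complex measure `dτ = f dν` (polar
decomposition, with `ν = |τ|` a finite measure supported in `(-1,1)` and
`‖f‖ = 1` ν-a.e.) with `|τ((-1,1))| ≥ 1`, there are points `ξ₁, …, ξₙ ∈ ℂ`,
lying in a disk `D(0, C)` with `C` depending only on `n` and `|τ|((-1,1))`,
such that `(1/τ((-1,1))) ∫ x^j dτ = (1/n) Σ ξ_k^j` for `j = 1, …, n`. -/
theorem stmt5 (n : ℕ) (hn : 0 < n) :
    ∃ C : ℝ → ℝ, ∀ (ν : Measure ℝ) (_ : IsFiniteMeasure ν)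
      (f : ℝ → ℂ),
      ν (Set.Ioo (-1) 1)ᶜ = 0 →
      (∀ᵐ x ∂ν, ‖f x‖ = 1) →
      AEStronglyMeasurable f ν →
      1 ≤ ‖∫ x, f x ∂ν‖ →
      (∀ j : ℕ, 1 ≤ j → j ≤ n → Integrable (fun x : ℝ => |x|^j) ν) →
      ∃ ξ : Fin n → ℂ,
        (∀ j : ℕ, 1 ≤ j → j ≤ n →
          (∫ x, (x:ℂ)^j * f x ∂ν) / (∫ x, f x ∂ν)
            = (1/(n:ℂ)) * ∑ k : Fin n, (ξ k)^j) ∧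
        (∀ k : Fin n, ‖ξ k‖ ≤ C ((ν Set.univ).toReal)) :=
  stmt5_general n
end
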